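/- arXiv:2004.01054 — 5 statements merged into one kernel-verified Lean document; each statement's English description precedes it below -/
import Mathlib

section
/- Let V : ℝ → ℝ be a nonnegative continuously differentiable function (of time) satisfying V'(t) ≤ -c₁·V(t)^{1+1/μ} - c₂·V(t)^{1-1/μ} for all t where V(t) > 0, with c₁, c₂ > 0 and μ > 1. Then V(T) = 0 for T = μπ/(2√(c₁c₂)), and V remains 0 afterward (i.e., for all t ≥ T, V(t) = 0). -/
theorem stmt_1 (V : ℝ → ℝ) (c₁ c₂ μ : ℝ)
    (hc₁ : 0 < c₁) (hc₂ : 0 < c₂) (hμ : 1 < μ)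
    (hV : ContDiff ℝ 1 V)
    (hVnonneg : ∀ t, 0 ≤ V t)
    (hVdot : ∀ t, 0 < V t →
      deriv V t ≤ -c₁ * (V t) ^ (1 + 1/μ) - c₂ * (V t) ^ (1 - 1/μ)) :
    ∀ t, μ * Real.pi / (2 * Real.sqrt (c₁ * c₂)) ≤ t → V t = 0 := by
  have hμ0 : 0 < μ := lt_trans one_pos hμ
  set S := Real.sqrt (c₁ * c₂) with hSdef
  have hS : 0 < S := Real.sqrt_pos.mpr (by positivity)
  set k := Real.sqrt (c₁ / c₂) with hkdef
  have hkpos : 0 < k := Real.sqrt_pos.mpr (by positivity)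
  have hk2 : k ^ 2 = c₁ / c₂ := Real.sq_sqrt (by positivity)
  have hkc : k * c₂ = S := by
    have h1 : (k * c₂) ^ 2 = S ^ 2 := by
      rw [mul_pow, hk2, hSdef, Real.sq_sqrt (by positivity)]
      field_simp
    have h2 : 0 ≤ k * c₂ := by positivity
    nlinarith [hS.le]
  have hkc₁ : k * c₁ = S * k ^ 2 := by
    rw [hk2, ← hkc]; field_simp
  set T := μ * Real.pi / (2 * S) with hTdef
  have hT0 : 0 ≤ T := by positivity
  have hdV : Differentiable ℝ V := hV.differentiable one_ne_zero
  -- deriv V ≤ 0 everywhere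
  have hderiv_nonpos : ∀ s, deriv V s ≤ 0 := by
    intro s
    rcases eq_or_lt_of_le (hVnonneg s) with h | h
    · have hmin : IsLocalMin V s := Filter.Eventually.of_forall fun x => by
        rw [← h]; exact hVnonneg x
      rw [hmin.deriv_eq_zero]
    · have := hVdot s h
      have h1 : 0 < (V s) ^ (1 + 1/μ) := Real.rpow_pos_of_pos h _
      have h2 : 0 < (V s) ^ (1 - 1/μ) := Real.rpow_pos_of_pos h _
      nlinarith
  have hanti : Antitone V := antitone_of_deriv_nonpos hdV hderiv_nonpos
  suffices hT : V T = 0 by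
    intro t ht
    have h1 : V t ≤ V T := hanti ht
    have h2 := hVnonneg t
    linarith [h1, h2, hT.ge, hT.le]
  by_contra hne
  have hpos : 0 < V T := (hVnonneg T).lt_of_ne' hne
  have hVpos : ∀ s, s ≤ T → 0 < V s := fun s hs => lt_of_lt_of_le hpos (hanti hs)
  set g : ℝ → ℝ := fun t => Real.arctan (k * (V t) ^ (1/μ)) + (S / μ) * t with hgdef
  have hgderiv : ∀ s, 0 < V s →
      HasDerivAt g ((1 / (1 + (k * (V s) ^ (1/μ)) ^ 2)) *
        (k * ((1/μ) * (V s) ^ (1/μ - 1) * deriv V s)) + S / μ) s := by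
    intro s hs
    have h1 : HasDerivAt V (deriv V s) s := (hdV s).hasDerivAt
    have h2 : HasDerivAt (fun t => (V t) ^ (1/μ))
        ((1/μ) * (V s) ^ (1/μ - 1) * deriv V s) s := by
      have := (Real.hasDerivAt_rpow_const (x := V s) (p := 1/μ) (Or.inl hs.ne')).comp s h1
      exact this
    have h3 : HasDerivAt (fun t => k * (V t) ^ (1/μ))
        (k * ((1/μ) * (V s) ^ (1/μ - 1) * deriv V s)) s := h2.const_mul k
    have h4 := (Real.hasDerivAt_arctan (k * (V s) ^ (1/μ))).comp s h3
    have h5 : HasDerivAt (fun t : ℝ => (S / μ) * t) (S / μ) s := by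
      simpa using (hasDerivAt_id s).const_mul (S / μ)
    exact h4.add h5
  have hgcont : Continuous g := by
    apply Continuous.add
    · apply Real.continuous_arctan.comp
      apply continuous_const.mul
      have : Continuous fun x : ℝ => x ^ (1/μ) := by
        rw [continuous_iff_continuousAt]
        intro x
        exact Real.continuousAt_rpow_const x (1/μ) (Or.inr (by positivity))
      exact this.comp hdV.continuous
    · exact continuous_const.mul continuous_id
  have hganti : AntitoneOn g (Set.Icc 0 T) := by
    apply antitoneOn_of_deriv_nonpos (convex_Icc 0 T) hgcont.continuousOn
    · intro x hx
      rw [interior_Icc] at hx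
      exact ((hgderiv x (hVpos x hx.2.le)).differentiableAt).differentiableWithinAt
    · intro x hx
      rw [interior_Icc] at hx
      have hvx : 0 < V x := hVpos x hx.2.le
      rw [(hgderiv x hvx).deriv]
      set v := V x with hvdef
      set u := v ^ (1/μ) with hudef
      have hu : 0 < u := Real.rpow_pos_of_pos hvx _
      have hu2 : u ^ 2 = v ^ (2/μ) := by
        rw [hudef, ← Real.rpow_natCast (v ^ (1/μ)) 2, ← Real.rpow_mul hvx.le]
        norm_num
        ring_nf
      have hw : 0 < v ^ (1/μ - 1) := Real.rpow_pos_of_pos hvx _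
      have hp : 0 < 1 + (k * u) ^ 2 := by positivity
      have hVd := hVdot x hvx
      have e1 : v ^ (1/μ - 1) * v ^ (1 + 1/μ) = u ^ 2 := by
        rw [← Real.rpow_add hvx, hu2]; ring_nf
      have e2 : v ^ (1/μ - 1) * v ^ (1 - 1/μ) = 1 := by
        rw [← Real.rpow_add hvx]; norm_num
      have key : k * ((1/μ) * v ^ (1/μ - 1) * (c₁ * v ^ (1 + 1/μ) + c₂ * v ^ (1 - 1/μ)))
          = (S / μ) * (1 + (k * u) ^ 2) := by
        have expand : k * ((1/μ) * v ^ (1/μ - 1) * (c₁ * v ^ (1 + 1/μ) + c₂ * v ^ (1 - 1/μ)))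
            = (1/μ) * ((k * c₁) * (v ^ (1/μ - 1) * v ^ (1 + 1/μ))
              + (k * c₂) * (v ^ (1/μ - 1) * v ^ (1 - 1/μ))) := by ring
        rw [expand, e1, e2, hkc₁, hkc]; ring
      have step : k * ((1/μ) * v ^ (1/μ - 1) * deriv V x)
          ≤ -(S / μ) * (1 + (k * u) ^ 2) := by
        have h5 : deriv V x ≤ -(c₁ * v ^ (1 + 1/μ) + c₂ * v ^ (1 - 1/μ)) := by
          linarith
        have h6 : (0:ℝ) ≤ k * ((1/μ) * v ^ (1/μ - 1)) := by positivity
        calc k * ((1/μ) * v ^ (1/μ - 1) * deriv V x)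
            = (k * ((1/μ) * v ^ (1/μ - 1))) * deriv V x := by ring
          _ ≤ (k * ((1/μ) * v ^ (1/μ - 1))) * -(c₁ * v ^ (1 + 1/μ) + c₂ * v ^ (1 - 1/μ)) :=
              mul_le_mul_of_nonneg_left h5 h6
          _ = -(k * ((1/μ) * v ^ (1/μ - 1) * (c₁ * v ^ (1 + 1/μ) + c₂ * v ^ (1 - 1/μ)))) := by
              ring
          _ = -(S / μ) * (1 + (k * u) ^ 2) := by rw [key]; ring
      have hmain : (1 / (1 + (k * u) ^ 2)) * (k * ((1/μ) * v ^ (1/μ - 1) * deriv V x))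
          ≤ -(S / μ) := by
        rw [div_mul_eq_mul_div, one_mul, div_le_iff₀ hp]
        calc k * ((1/μ) * v ^ (1/μ - 1) * deriv V x)
            ≤ -(S / μ) * (1 + (k * u) ^ 2) := step
          _ = -(S / μ) * (1 + (k * u) ^ 2) := rfl
      linarith
  have hmem0 : (0:ℝ) ∈ Set.Icc 0 T := ⟨le_refl 0, hT0⟩
  have hmemT : T ∈ Set.Icc 0 T := ⟨hT0, le_refl T⟩
  have hle := hganti hmem0 hmemT hT0
  have hST : (S / μ) * T = Real.pi / 2 := by
    rw [hTdef]; field_simp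
  have hg0lt : Real.arctan (k * (V 0) ^ (1/μ)) < Real.pi / 2 :=
    Real.arctan_lt_pi_div_two _
  have hgTpos : 0 < Real.arctan (k * (V T) ^ (1/μ)) := by
    have : (0:ℝ) < k * (V T) ^ (1/μ) := by positivity
    simpa [Real.arctan_zero] using Real.arctan_strictMono this
  simp only [hgdef] at hle
  rw [hST, mul_zero] at hle
  linarith
end

section
/- Let y : [0,∞) → ℝ solve the ODE y' = -c₁·y^{1+1/μ} - c₂·y^{1-1/μ} with y(0) = y₀ > 0, c₁, c₂ > 0, μ > 1. Then for any y₀ > 0, the time for y to reach 0 is at most ∫₀^∞ dv/(c₁ v^{1+1/μ} + c₂ v^{1-1/μ}) = μπ/(2√(c₁c₂)) (using the substitution reducing the integral to an arctangent). -/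
open MeasureTheory Real Set Filter Topology

section fixedTimeAux
variable {c₁ c₂ μ : ℝ}

lemma ftAux_gpos (hc₁ : 0 < c₁) (hc₂ : 0 < c₂) {x : ℝ} (hx : 0 < x) :
    0 < c₁ * x ^ (1 + 1/μ) + c₂ * x ^ (1 - 1/μ) :=
  add_pos (mul_pos hc₁ (rpow_pos_of_pos hx _)) (mul_pos hc₂ (rpow_pos_of_pos hx _))

lemma ftAux_fcont (hc₁ : 0 < c₁) (hc₂ : 0 < c₂) :
    ContinuousOn (fun v : ℝ => 1 / (c₁ * v ^ (1 + 1/μ) + c₂ * v ^ (1 - 1/μ))) (Ioi 0) := by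
  intro x hx
  apply ContinuousAt.continuousWithinAt
  have h1 : ContinuousAt (fun v : ℝ => v ^ (1+1/μ)) x :=
    Real.continuousAt_rpow_const x _ (Or.inl (ne_of_gt hx))
  have h2 : ContinuousAt (fun v : ℝ => v ^ (1-1/μ)) x :=
    Real.continuousAt_rpow_const x _ (Or.inl (ne_of_gt hx))
  exact ContinuousAt.div continuousAt_const
    ((continuousAt_const.mul h1).add (continuousAt_const.mul h2))
    (ne_of_gt (ftAux_gpos hc₁ hc₂ hx))

lemma ftAux_fint (hc₁ : 0 < c₁) (hc₂ : 0 < c₂) (hμ : 1 < μ) :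
    IntegrableOn (fun v : ℝ => 1 / (c₁ * v ^ (1 + 1/μ) + c₂ * v ^ (1 - 1/μ))) (Ioi 0) := by
  have hμ0 : (0:ℝ) < μ := lt_trans one_pos hμ
  have hμ1 : 0 < 1/μ := by positivity
  have hμlt : 1/μ < 1 := by rw [div_lt_one hμ0]; exact hμ
  have key : Ioc (0:ℝ) 1 ∪ Ioi 1 = Ioi 0 := Ioc_union_Ioi_eq_Ioi zero_le_one
  rw [← key]
  apply IntegrableOn.union
  · apply Integrable.mono' (g := fun v => c₂⁻¹ * v ^ (1/μ - 1))
    · exact ((intervalIntegrable_iff_integrableOn_Ioc_of_le zero_le_one).1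
        (intervalIntegral.intervalIntegrable_rpow' (by linarith))).const_mul c₂⁻¹
    · exact ((ftAux_fcont hc₁ hc₂).mono (fun x hx => hx.1)).aestronglyMeasurable measurableSet_Ioc
    · filter_upwards [ae_restrict_mem measurableSet_Ioc] with v hv
      have hv0 : 0 < v := hv.1
      have h1 : c₂ * v ^ (1-1/μ) ≤ c₁ * v ^ (1 + 1/μ) + c₂ * v ^ (1 - 1/μ) := by
        nlinarith [mul_pos hc₁ (rpow_pos_of_pos hv0 (1+1/μ))]
      have h2 : 0 < c₂ * v ^ (1-1/μ) := mul_pos hc₂ (rpow_pos_of_pos hv0 _)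
      rw [Real.norm_eq_abs, abs_of_nonneg (by positivity)]
      calc 1 / (c₁ * v ^ (1 + 1/μ) + c₂ * v ^ (1 - 1/μ)) ≤ 1 / (c₂ * v ^ (1-1/μ)) :=
            one_div_le_one_div_of_le h2 h1
        _ = c₂⁻¹ * v ^ (1/μ - 1) := by
            rw [one_div, mul_inv, ← Real.rpow_neg hv0.le]
            ring_nf
  · apply Integrable.mono' (g := fun v => c₁⁻¹ * v ^ (-(1 + 1/μ)))
    · exact (integrableOn_Ioi_rpow_of_lt (by linarith) one_pos).const_mul c₁⁻¹
    · exact ((ftAux_fcont hc₁ hc₂).mono (fun x (hx : x ∈ Ioi (1:ℝ)) => mem_Ioi.2 (lt_trans one_pos (mem_Ioi.1 hx)))).aestronglyMeasurable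
        measurableSet_Ioi
    · filter_upwards [ae_restrict_mem measurableSet_Ioi] with v hv
      have hv0 : (0:ℝ) < v := lt_trans one_pos hv
      have h1 : c₁ * v ^ (1+1/μ) ≤ c₁ * v ^ (1 + 1/μ) + c₂ * v ^ (1 - 1/μ) := by
        nlinarith [mul_pos hc₂ (rpow_pos_of_pos hv0 (1-1/μ))]
      have h2 : 0 < c₁ * v ^ (1+1/μ) := mul_pos hc₁ (rpow_pos_of_pos hv0 _)
      rw [Real.norm_eq_abs, abs_of_nonneg (by positivity)]
      calc 1 / (c₁ * v ^ (1 + 1/μ) + c₂ * v ^ (1 - 1/μ)) ≤ 1 / (c₁ * v ^ (1+1/μ)) :=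
            one_div_le_one_div_of_le h2 h1
        _ = c₁⁻¹ * v ^ (-(1 + 1/μ)) := by
            rw [one_div, mul_inv, ← Real.rpow_neg hv0.le]

lemma ftAux_hasDerivAt_F (hc₁ : 0 < c₁) (hc₂ : 0 < c₂) (hμ : 1 < μ) {x : ℝ} (hx : 0 < x) :
    HasDerivAt (fun x : ℝ => (μ / Real.sqrt (c₁*c₂)) * Real.arctan (Real.sqrt (c₁/c₂) * x ^ (1/μ)))
      (1 / (c₁ * x ^ (1 + 1/μ) + c₂ * x ^ (1 - 1/μ))) x := by
  have hμ0 : (0:ℝ) < μ := lt_trans one_pos hμ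
  have h1 : HasDerivAt (fun x : ℝ => x ^ (1/μ)) ((1/μ) * x ^ (1/μ - 1)) x :=
    Real.hasDerivAt_rpow_const (Or.inl (ne_of_gt hx))
  have h3 := ((Real.hasDerivAt_arctan (Real.sqrt (c₁/c₂) * x ^ (1/μ))).comp x
    (h1.const_mul (Real.sqrt (c₁/c₂))))
  have h4 := h3.const_mul (μ / Real.sqrt (c₁*c₂))
  convert h4 using 1
  · rfl
  · rfl
  · rfl
  have hs : (0:ℝ) < x ^ (1/μ) := rpow_pos_of_pos hx _
  have ha : (0:ℝ) < Real.sqrt (c₁/c₂) := Real.sqrt_pos.2 (by positivity)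
  have hA : (0:ℝ) < Real.sqrt (c₁*c₂) := Real.sqrt_pos.2 (by positivity)
  have haA : Real.sqrt (c₁/c₂) * Real.sqrt (c₁*c₂) = c₁ := by
    rw [← Real.sqrt_mul (by positivity), show c₁/c₂*(c₁*c₂) = c₁^2 by field_simp]
    exact Real.sqrt_sq hc₁.le
  have hac : Real.sqrt (c₁/c₂) * c₂ = Real.sqrt (c₁*c₂) := by
    have h1 : Real.sqrt (c₁/c₂ * c₂^2) = Real.sqrt (c₁/c₂) * Real.sqrt (c₂^2) :=
      Real.sqrt_mul (by positivity) _
    rw [Real.sqrt_sq hc₂.le] at h1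
    rw [← h1]
    congr 1
    field_simp
  have hx1 : x ^ (1+1/μ) = x * x ^ (1/μ) := by
    rw [Real.rpow_add hx, Real.rpow_one]
  have hx2 : x ^ (1-1/μ) = x / x ^ (1/μ) := by
    rw [Real.rpow_sub hx, Real.rpow_one]
  have hx3 : x ^ (1/μ-1) = x ^ (1/μ) / x := by
    rw [Real.rpow_sub hx, Real.rpow_one]
  rw [hx1, hx2, hx3]
  set s := x ^ (1/μ) with hsdef
  set a := Real.sqrt (c₁/c₂) with hadef
  set A := Real.sqrt (c₁*c₂) with hAdef
  have hden : 0 < c₁ * (x*s) + c₂ * (x/s) := by positivity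
  have h1as : (0:ℝ) < 1 + (a*s)^2 := by positivity
  field_simp
  ring_nf
  linear_combination (-1) * hac + (s^2*a) * haA

lemma ftAux_integral_value (hc₁ : 0 < c₁) (hc₂ : 0 < c₂) (hμ : 1 < μ) :
    ∫ v in Ioi (0:ℝ), 1 / (c₁ * v ^ (1 + 1/μ) + c₂ * v ^ (1 - 1/μ))
      = μ * π / (2 * Real.sqrt (c₁ * c₂)) := by
  have hμ0 : (0:ℝ) < μ := lt_trans one_pos hμ
  have hA : (0:ℝ) < Real.sqrt (c₁*c₂) := Real.sqrt_pos.2 (by positivity)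
  have ha : (0:ℝ) < Real.sqrt (c₁/c₂) := Real.sqrt_pos.2 (by positivity)
  set F : ℝ → ℝ := fun x => (μ / Real.sqrt (c₁*c₂)) * Real.arctan (Real.sqrt (c₁/c₂) * x ^ (1/μ))
    with hF
  have hcont : ContinuousWithinAt F (Ici 0) 0 := by
    apply ContinuousAt.continuousWithinAt
    have h0 : ContinuousAt (fun x : ℝ => x ^ (1/μ)) 0 :=
      Real.continuousAt_rpow_const 0 _ (Or.inr (by positivity))
    exact continuousAt_const.mul
      ((Real.continuous_arctan.continuousAt).comp (continuousAt_const.mul h0))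
  have htend : Tendsto F atTop (𝓝 ((μ / Real.sqrt (c₁*c₂)) * (π/2))) := by
    apply Tendsto.const_mul
    have h1 : Tendsto (fun x : ℝ => Real.sqrt (c₁/c₂) * x ^ (1/μ)) atTop atTop :=
      (tendsto_rpow_atTop (by positivity)).const_mul_atTop ha
    exact (Real.tendsto_arctan_atTop.mono_right nhdsWithin_le_nhds).comp h1
  rw [integral_Ioi_of_hasDerivAt_of_tendsto hcont
      (fun x hx => ftAux_hasDerivAt_F hc₁ hc₂ hμ hx) (ftAux_fint hc₁ hc₂ hμ) htend]
  have hF0 : F 0 = 0 := by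
    show (μ / Real.sqrt (c₁*c₂)) * Real.arctan (Real.sqrt (c₁/c₂) * (0:ℝ)^(1/μ)) = 0
    rw [Real.zero_rpow (by positivity), mul_zero, Real.arctan_zero, mul_zero]
  rw [hF0]
  field_simp
  ring

end fixedTimeAux

theorem stmt_2 (y : ℝ → ℝ) (y₀ c₁ c₂ μ : ℝ)
    (hc₁ : 0 < c₁) (hc₂ : 0 < c₂) (hμ : 1 < μ) (hy₀ : 0 < y₀)
    (hy0 : y 0 = y₀)
    (hdiff : Differentiable ℝ y)
    (hynonneg : ∀ t, 0 ≤ t → 0 ≤ y t)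
    (hode : ∀ t, 0 ≤ t → deriv y t = -c₁ * (y t) ^ (1 + 1/μ) - c₂ * (y t) ^ (1 - 1/μ)) :
    (∫ v in Set.Ioi (0:ℝ), 1 / (c₁ * v ^ (1 + 1/μ) + c₂ * v ^ (1 - 1/μ))
        = μ * Real.pi / (2 * Real.sqrt (c₁ * c₂))) ∧
    ∃ T, 0 ≤ T ∧ T ≤ μ * Real.pi / (2 * Real.sqrt (c₁ * c₂)) ∧ y T = 0 := by
  have hμ0 : (0:ℝ) < μ := lt_trans one_pos hμ
  set f : ℝ → ℝ := fun v => 1 / (c₁ * v ^ (1 + 1/μ) + c₂ * v ^ (1 - 1/μ)) with hf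
  have hint : IntegrableOn f (Ioi 0) := ftAux_fint hc₁ hc₂ hμ
  have hIval := ftAux_integral_value hc₁ hc₂ hμ
  refine ⟨hIval, ?_⟩
  set G : ℝ → ℝ := fun x => ∫ v in (0:ℝ)..x, f v with hG
  have hFTC : ∀ x : ℝ, 0 < x → HasDerivAt G (f x) x := by
    intro x hx
    apply intervalIntegral.integral_hasDerivAt_right
    · rw [intervalIntegrable_iff_integrableOn_Ioc_of_le hx.le]
      exact hint.mono_set Set.Ioc_subset_Ioi_self
    · exact (ftAux_fcont hc₁ hc₂).stronglyMeasurableAtFilter isOpen_Ioi x hx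
    · exact (ftAux_fcont hc₁ hc₂).continuousAt (Ioi_mem_nhds hx)
  have hGpos : ∀ x : ℝ, 0 < x → 0 < G x := by
    intro x hx
    apply intervalIntegral.intervalIntegral_pos_of_pos_on
    · rw [intervalIntegrable_iff_integrableOn_Ioc_of_le hx.le]
      exact hint.mono_set Set.Ioc_subset_Ioi_self
    · intro v hv
      exact one_div_pos.2 (ftAux_gpos hc₁ hc₂ hv.1)
    · exact hx
  set T := G y₀ with hT
  have hGle : T ≤ μ * Real.pi / (2 * Real.sqrt (c₁*c₂)) := by
    rw [← hIval, hT, hG]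
    simp only
    rw [intervalIntegral.integral_of_le hy₀.le]
    apply setIntegral_mono_set hint
    · filter_upwards [ae_restrict_mem measurableSet_Ioi] with v hv
      exact le_of_lt (one_div_pos.2 (ftAux_gpos hc₁ hc₂ hv))
    · exact HasSubset.Subset.eventuallyLE Set.Ioc_subset_Ioi_self
  have hzero : ∃ t ∈ Icc (0:ℝ) T, y t = 0 := by
    by_contra hcon
    push_neg at hcon
    have hpos : ∀ t ∈ Icc (0:ℝ) T, 0 < y t := fun t ht =>
      lt_of_le_of_ne (hynonneg t ht.1) (Ne.symm (hcon t ht))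
    have hh : ∀ t ∈ Icc (0:ℝ) T, HasDerivAt (fun t => G (y t) + t) 0 t := by
      intro t ht
      have hyd : HasDerivAt y (deriv y t) t := (hdiff t).hasDerivAt
      have h1 : HasDerivAt (fun t => G (y t)) (f (y t) * deriv y t) t :=
        (hFTC (y t) (hpos t ht)).comp t hyd
      have h2 := h1.add (hasDerivAt_id t)
      convert h2 using 1
      · rfl
      · rfl
      · rfl
      have hg := ftAux_gpos hc₁ hc₂ (μ := μ) (hpos t ht)
      rw [hode t ht.1, hf]
      show 0 = 1 / (c₁ * (y t) ^ (1 + 1/μ) + c₂ * (y t) ^ (1 - 1/μ)) *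
        (-c₁ * (y t) ^ (1 + 1/μ) - c₂ * (y t) ^ (1 - 1/μ)) + 1
      rw [show -c₁ * (y t) ^ (1 + 1/μ) - c₂ * (y t) ^ (1 - 1/μ)
            = -(c₁ * (y t) ^ (1 + 1/μ) + c₂ * (y t) ^ (1 - 1/μ)) from by ring,
          mul_neg, one_div, inv_mul_cancel₀ (ne_of_gt hg)]
      norm_num
    have hconst := constant_of_has_deriv_right_zero
      (f := fun t => G (y t) + t) (a := 0) (b := T)
      (fun t ht => (hh t ht).continuousAt.continuousWithinAt)
      (fun t ht => (hh t (Ico_subset_Icc_self ht)).hasDerivWithinAt)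
    have hend : G (y T) + T = G (y 0) + 0 := hconst T (right_mem_Icc.2 (hGpos y₀ hy₀).le)
    rw [hy0] at hend
    have hzero' : G (y T) = 0 := by
      have : G (y T) + T = T + 0 := by simpa [hT] using hend
      linarith
    have := hGpos (y T) (hpos T (right_mem_Icc.2 (hGpos y₀ hy₀).le))
    linarith
  obtain ⟨t, ht, hyt⟩ := hzero
  exact ⟨t, ht.1, le_trans ht.2 hGle, hyt⟩
end

section
/- Let h : [0,∞) → ℝ be continuously differentiable and α : ℝ → ℝ be locally Lipschitz, strictly increasing, with α(0) = 0. If h(0) < 0 and h'(t) ≤ α(-h(t)) for all t, then h(t) < 0 for all t ≥ 0 (strict invariance of the open sublevel set). -/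
theorem stmt_5 (h : ℝ → ℝ) (α : ℝ → ℝ)
    (hh : ContDiff ℝ 1 h)
    (hα : LocallyLipschitz α)
    (hα0 : α 0 = 0)
    (hαmono : StrictMono α)
    (h0 : h 0 < 0)
    (hbar : ∀ t, 0 ≤ t → deriv h t ≤ α (-h t)) :
    ∀ t, 0 ≤ t → h t < 0 := by
  intro t ht
  by_contra hge
  push_neg at hge
  have hc : Continuous h := hh.continuous
  have hd : Differentiable ℝ h := hh.differentiable one_ne_zero
  obtain ⟨s, hs, hs0⟩ : ∃ s ∈ Set.Icc 0 t, h s = 0 := by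
    have := intermediate_value_Icc ht hc.continuousOn (a := 0) (b := t)
    exact this ⟨le_of_lt h0, hge⟩
  set Z : Set ℝ := Set.Icc 0 t ∩ h ⁻¹' {0} with hZdef
  have hZne : Z.Nonempty := ⟨s, hs, hs0⟩
  have hZclosed : IsClosed Z := isClosed_Icc.inter (isClosed_singleton.preimage hc)
  have hbdd : BddBelow Z := ⟨0, fun z hz => hz.1.1⟩
  set s₀ := sInf Z with hs₀def
  have hs₀mem : s₀ ∈ Z := hZclosed.csInf_mem hZne hbdd
  have hs₀0 : h s₀ = 0 := hs₀mem.2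
  have hs₀nonneg : (0:ℝ) ≤ s₀ := hs₀mem.1.1
  have hs₀pos : 0 < s₀ := by
    rcases eq_or_lt_of_le hs₀nonneg with heq | hlt
    · exfalso; rw [← heq] at hs₀0; linarith
    · exact hlt
  have hneg : ∀ u, 0 ≤ u → u < s₀ → h u < 0 := by
    intro u hu hus
    have hut : u ≤ t := le_trans hus.le hs₀mem.1.2
    rcases lt_trichotomy (h u) 0 with hlt | heq | hgt
    · exact hlt
    · exfalso
      have : u ∈ Z := ⟨⟨hu, hut⟩, heq⟩
      exact absurd (csInf_le hbdd this) (not_le.mpr hus)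
    · exfalso
      obtain ⟨v, hv, hv0⟩ : ∃ v ∈ Set.Icc 0 u, h v = 0 := by
        have := intermediate_value_Icc hu hc.continuousOn (a := 0) (b := u)
        exact this ⟨le_of_lt h0, le_of_lt hgt⟩
      have : v ∈ Z := ⟨⟨hv.1, le_trans hv.2 hut⟩, hv0⟩
      have : s₀ ≤ v := csInf_le hbdd this
      have : v < s₀ := lt_of_le_of_lt hv.2 hus
      linarith
  -- local Lipschitz bound near 0
  obtain ⟨K, U, hU, hK⟩ := hα 0
  obtain ⟨ε, hε, hball⟩ := Metric.mem_nhds_iff.mp hU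
  -- find δ by continuity of h at s₀
  have hconts : ContinuousAt h s₀ := hc.continuousAt
  obtain ⟨δ, hδ, hδprop⟩ := Metric.continuousAt_iff.mp hconts ε hε
  set a := max (s₀ - δ/2) 0 with hadef
  have ha0 : 0 ≤ a := le_max_right _ _
  have has₀ : a < s₀ := by
    apply max_lt
    · linarith
    · exact hs₀pos
  have hclose : ∀ u ∈ Set.Icc a s₀, dist u s₀ < δ := by
    intro u hu
    rw [Real.dist_eq, abs_sub_lt_iff]
    constructor
    · linarith [hu.2]
    · have h1 : s₀ - δ/2 ≤ a := le_max_left _ _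
      have := hu.1
      linarith
  have hmemU : ∀ u ∈ Set.Icc a s₀, -h u ∈ U := by
    intro u hu
    apply hball
    have := hδprop (hclose u hu)
    rw [Real.dist_eq] at this
    rw [Metric.mem_ball, Real.dist_eq, hs₀0] at *
    simpa [abs_neg] using this
  have h0U : (0:ℝ) ∈ U := hball (Metric.mem_ball_self hε)
  have hle0 : ∀ u ∈ Set.Icc a s₀, h u ≤ 0 := by
    intro u hu
    rcases eq_or_lt_of_le hu.2 with heq | hlt
    · rw [heq, hs₀0]
    · exact le_of_lt (hneg u (le_trans ha0 hu.1) hlt)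
  have hαbound : ∀ u ∈ Set.Icc a s₀, α (-h u) ≤ K * (-h u) := by
    intro u hu
    have hdm := hK.dist_le_mul (-h u) (hmemU u hu) 0 h0U
    rw [Real.dist_eq, Real.dist_eq, hα0, sub_zero, sub_zero] at hdm
    have h1 : α (-h u) ≤ |α (-h u)| := le_abs_self _
    have h2 : |(-h u)| = -h u := abs_of_nonneg (by linarith [hle0 u hu])
    calc α (-h u) ≤ |α (-h u)| := h1
      _ ≤ K * |(-h u)| := hdm
      _ = K * (-h u) := by rw [h2]
  -- define g and show it's antitone
  set g : ℝ → ℝ := fun u => h u * Real.exp (K * u) with hgdef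
  have hgd : ∀ u : ℝ, HasDerivAt g (deriv h u * Real.exp (K * u) + h u * (Real.exp (K * u) * K)) u := by
    intro u
    have h1 : HasDerivAt h (deriv h u) u := (hd u).hasDerivAt
    have h2 : HasDerivAt (fun u : ℝ => Real.exp (K * u)) (Real.exp (K * u) * K) u := by
      have : HasDerivAt (fun u : ℝ => (K:ℝ) * u) K u := by
        simpa using (hasDerivAt_id u).const_mul (K:ℝ)
      exact this.exp
    exact h1.mul h2
  have hderiv_nonpos : ∀ u ∈ Set.Icc a s₀, deriv g u ≤ 0 := by
    intro u hu
    rw [(hgd u).deriv]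
    have hu0 : 0 ≤ u := le_trans ha0 hu.1
    have h1 : deriv h u ≤ α (-h u) := hbar u hu0
    have h2 : α (-h u) ≤ K * (-h u) := hαbound u hu
    have h3 : deriv h u ≤ K * (-h u) := le_trans h1 h2
    have hexp : 0 < Real.exp (K * u) := Real.exp_pos _
    nlinarith [hexp]
  have hanti : AntitoneOn g (Set.Icc a s₀) := by
    apply antitoneOn_of_deriv_nonpos (convex_Icc a s₀)
    · exact (fun u _ => ((hgd u).differentiableAt).continuousAt.continuousWithinAt)
    · intro u hu
      exact ((hgd u).differentiableAt).differentiableWithinAt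
    · intro u hu
      rw [interior_Icc] at hu
      exact hderiv_nonpos u (Set.mem_Icc_of_Ioo hu)
  have hga : g a < 0 := by
    have : h a < 0 := hneg a ha0 has₀
    have := Real.exp_pos ((K:ℝ) * a)
    exact mul_neg_of_neg_of_pos ‹h a < 0› this
  have hgs : g s₀ = 0 := by simp [hgdef, hs₀0]
  have := hanti ⟨le_refl a, has₀.le⟩ ⟨has₀.le, le_refl s₀⟩ has₀.le
  rw [hgs] at this
  linarith
end

section
/- Let h : [0,∞) → ℝ be C² and define h̄ = h' + h. If h̄(0) ≤ 0 and h̄'(t) ≤ α(-h̄(t)) for all t (with α locally Lipschitz class-K), then h̄(t) ≤ 0 for all t ≥ 0, and moreover h(t) ≤ max{h(0), 0}·e^{-t} ≤ max{h(0),0} for all t; in particular if h(0) ≤ 0 then h(t) ≤ 0 for all t ≥ 0. -/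
theorem stmt_13 (h : ℝ → ℝ) (α : ℝ → ℝ)
    (hh : ContDiff ℝ 2 h)
    (hα : LocallyLipschitz α)
    (hα0 : α 0 = 0)
    (hαmono : StrictMono α)
    (hbar0 : deriv h 0 + h 0 ≤ 0)
    (hbar : ∀ t, 0 ≤ t →
      deriv (fun s => deriv h s + h s) t ≤ α (-(deriv h t + h t))) :
    ∀ t, 0 ≤ t →
      (deriv h t + h t ≤ 0 ∧
       h t ≤ max (h 0) 0 * Real.exp (-t) ∧
       h t ≤ max (h 0) 0 ∧
       (h 0 ≤ 0 → h t ≤ 0)) := by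
  have hhd : Differentiable ℝ h := hh.differentiable (by norm_num)
  have hderiv : ContDiff ℝ 1 (deriv h) := by
    have h2 : ContDiff ℝ ((1:ℕ∞)+1) h := by
      exact_mod_cast hh
    exact (contDiff_succ_iff_deriv.mp h2).2.2
  have hgd : Differentiable ℝ (fun s => deriv h s + h s) :=
    (hderiv.differentiable one_ne_zero).add hhd
  set g : ℝ → ℝ := fun s => deriv h s + h s with hg
  -- Step 1: g ≤ 0 on [0,∞)
  have key : ∀ t, 0 ≤ t → g t ≤ 0 := by
    intro t ht
    by_contra hpos
    push_neg at hpos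
    have hS : True := trivial
    set S := {u : ℝ | u ∈ Set.Icc 0 t ∧ g u ≤ 0} with hSdef
    have h0S : (0:ℝ) ∈ S := ⟨⟨le_rfl, ht⟩, hbar0⟩
    have hbdd : BddAbove S := ⟨t, fun u hu => hu.1.2⟩
    obtain ⟨s, hs⟩ : ∃ s, s = sSup S := ⟨_, rfl⟩
    have hsmem : s ∈ S := by
      rw [hs]
      have hclosed : IsClosed S := by
        have : S = Set.Icc 0 t ∩ g ⁻¹' Set.Iic 0 := by
          ext u; simp [hSdef, Set.mem_Icc, and_comm]
        rw [this]
        exact isClosed_Icc.inter (isClosed_Iic.preimage hgd.continuous)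
      exact hclosed.csSup_mem ⟨0, h0S⟩ hbdd
    have hs0 : 0 ≤ s := hsmem.1.1
    have hst : s ≤ t := hsmem.1.2
    have hslt : s < t := lt_of_le_of_ne hst (by rintro rfl; exact absurd hsmem.2 (not_le.mpr hpos))
    have hgpos : ∀ u, s < u → u ≤ t → 0 < g u := by
      intro u hsu hut
      by_contra hle
      push_neg at hle
      have hu : u ∈ S := ⟨⟨hs0.trans hsu.le, hut⟩, hle⟩
      have := le_csSup hbdd hu
      rw [← hs] at this
      exact absurd this (not_le.mpr hsu)
    have hanti : AntitoneOn g (Set.Icc s t) := by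
      apply antitoneOn_of_deriv_nonpos (convex_Icc s t)
        (hgd.continuous.continuousOn)
        (fun u hu => (hgd u).differentiableWithinAt)
      intro u hu
      rw [interior_Icc] at hu
      have hupos : 0 < g u := hgpos u hu.1 hu.2.le
      have := hbar u (hs0.trans hu.1.le)
      have : deriv g u < 0 := by
        calc deriv g u ≤ α (-g u) := this
          _ < α 0 := hαmono (by linarith)
          _ = 0 := hα0
      linarith
    have : g t ≤ g s := hanti ⟨le_rfl, hst⟩ ⟨hst, le_rfl⟩ hst
    linarith [hsmem.2]
  -- Step 2: Gronwall via f = h * exp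
  have hf : ∀ t, HasDerivAt (fun u => h u * Real.exp u)
      (g t * Real.exp t) t := by
    intro t
    have : HasDerivAt (fun u => h u * Real.exp u) (deriv h t * Real.exp t + h t * Real.exp t) t :=
      ((hhd t).hasDerivAt).mul (Real.hasDerivAt_exp t)
    convert this using 1
    show (deriv h t + h t) * Real.exp t = _; ring
  have hanti2 : AntitoneOn (fun u => h u * Real.exp u) (Set.Ici 0) := by
    apply antitoneOn_of_deriv_nonpos (convex_Ici 0)
      (Continuous.continuousOn (hhd.continuous.mul Real.continuous_exp))
      (fun u _ => (hf u).differentiableAt.differentiableWithinAt)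
    intro u hu
    rw [interior_Ici] at hu
    rw [show deriv (h * Real.exp) u = g u * Real.exp u from (hf u).deriv]
    have : g u ≤ 0 := key u hu.le
    exact mul_nonpos_of_nonpos_of_nonneg this (Real.exp_pos u).le
  intro t ht
    -- main bounds
  have hstep : h t * Real.exp t ≤ h 0 := by
    have := hanti2 (Set.self_mem_Ici) ht ht
    simpa using this
  have hmain : h t ≤ h 0 * Real.exp (-t) := by
    have hexp : (0:ℝ) < Real.exp t := Real.exp_pos t
    rw [Real.exp_neg, ← div_eq_mul_inv, le_div_iff₀ hexp]
    linarith
  have hmax : h t ≤ max (h 0) 0 * Real.exp (-t) := by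
    calc h t ≤ h 0 * Real.exp (-t) := hmain
      _ ≤ max (h 0) 0 * Real.exp (-t) := by
          apply mul_le_mul_of_nonneg_right (le_max_left _ _) (Real.exp_pos _).le
  refine ⟨key t ht, hmax, ?_, ?_⟩
  · calc h t ≤ max (h 0) 0 * Real.exp (-t) := hmax
      _ ≤ max (h 0) 0 * 1 := by
          apply mul_le_mul_of_nonneg_left _ (le_max_right _ _)
          exact Real.exp_le_one_iff.mpr (by linarith)
      _ = max (h 0) 0 := mul_one _
  · intro h00
    calc h t ≤ h 0 * Real.exp (-t) := hmain
      _ ≤ 0 := mul_nonpos_of_nonpos_of_nonneg h00 (Real.exp_pos _).le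
end

section
/- Let V : [0,∞) → ℝ be continuously differentiable, V(0) > 0, c₁ = c₂ = μπ/(2T̄) for given T̄ > 0, μ > 1, and suppose V'(t) ≤ -c₁·V(t)^{1+1/μ} - c₂·V(t)^{1-1/μ} whenever V(t) > 0. Then V(T̄) ≤ 0. -/
theorem stmt_18 (V : ℝ → ℝ) (Tbar μ : ℝ)
    (hTbar : 0 < Tbar) (hμ : 1 < μ)
    (hV : ContDiff ℝ 1 V)
    (hV0 : 0 < V 0)
    (hVdot : ∀ t, 0 ≤ t → 0 < V t →
      deriv V t ≤ -(μ * Real.pi / (2 * Tbar)) * (V t) ^ (1 + 1/μ)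
                  - (μ * Real.pi / (2 * Tbar)) * (V t) ^ (1 - 1/μ)) :
    V Tbar ≤ 0 := by
  by_contra hcon
  push_neg at hcon
  have hμ0 : (0:ℝ) < μ := lt_trans one_pos hμ
  have hπ : (0:ℝ) < Real.pi := Real.pi_pos
  set c : ℝ := μ * Real.pi / (2 * Tbar) with hc
  have hc0 : 0 < c := by positivity
  have hVcont : Continuous V := hV.continuous
  have hVdiff : Differentiable ℝ V := hV.differentiable one_ne_zero
  -- V > 0 on [0, Tbar]
  have hpos : ∀ t ∈ Set.Icc (0:ℝ) Tbar, 0 < V t := by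
    by_contra hbad
    push_neg at hbad
    obtain ⟨s, hs, hVs⟩ := hbad
    let K : Set ℝ := {t | t ∈ Set.Icc (0:ℝ) Tbar ∧ V t ≤ 0}
    have hKne : K.Nonempty := ⟨s, hs, hVs⟩
    have hKbdd : BddAbove K := ⟨Tbar, fun x hx => hx.1.2⟩
    have hKclosed : IsClosed K :=
      (isClosed_Icc.inter (isClosed_le hVcont continuous_const))
    have hSmem : sSup K ∈ K := hKclosed.csSup_mem hKne hKbdd
    set S := sSup K with hS
    have hS0 : 0 ≤ S := hSmem.1.1
    have hST : S ≤ Tbar := hSmem.1.2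
    have hSlt : S < Tbar := lt_of_le_of_ne hST
      (fun h => absurd (h ▸ hSmem.2) (not_le.mpr hcon))
    have hposS : ∀ x ∈ Set.Ioc S Tbar, 0 < V x := by
      intro x hx
      by_contra hx0
      push_neg at hx0
      have : x ∈ K := ⟨⟨le_trans hS0 hx.1.le, hx.2⟩, hx0⟩
      exact absurd (le_csSup hKbdd this) (not_le.mpr hx.1)
    have hanti : AntitoneOn V (Set.Icc S Tbar) := by
      apply antitoneOn_of_deriv_nonpos (convex_Icc S Tbar) hVcont.continuousOn
        (hVdiff.differentiableOn)
      intro x hx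
      rw [interior_Icc] at hx
      have hVx : 0 < V x := hposS x ⟨hx.1, hx.2.le⟩
      have h0x : 0 ≤ x := le_trans hS0 hx.1.le
      have := hVdot x h0x hVx
      have h1 : 0 < V x ^ (1 + 1/μ) := Real.rpow_pos_of_pos hVx _
      have h2 : 0 < V x ^ (1 - 1/μ) := Real.rpow_pos_of_pos hVx _
      nlinarith
    have := hanti ⟨le_refl S, hST⟩ ⟨hST, le_refl Tbar⟩ hST
    linarith [hSmem.2]
  -- the Lyapunov-like function
  set g : ℝ → ℝ := fun t => Real.arctan ((V t) ^ (1/μ)) + (Real.pi / (2 * Tbar)) * t with hg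
  have hganti : AntitoneOn g (Set.Icc (0:ℝ) Tbar) := by
    have hgcont : ContinuousOn g (Set.Icc (0:ℝ) Tbar) := by
      apply ContinuousOn.add
      · exact Real.continuous_arctan.comp_continuousOn
          (hVcont.continuousOn.rpow_const (fun x hx => Or.inr (by positivity)))
      · exact (continuous_const.mul continuous_id).continuousOn
    have hderiv : ∀ x ∈ interior (Set.Icc (0:ℝ) Tbar),
        HasDerivAt g ((1 / (1 + ((V x) ^ (1/μ))^2)) * (deriv V x * (1/μ) * (V x) ^ (1/μ - 1))
          + Real.pi / (2 * Tbar)) x := by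
      intro x hx
      rw [interior_Icc] at hx
      have hVx : 0 < V x := hpos x ⟨hx.1.le, hx.2.le⟩
      have hd1 : HasDerivAt V (deriv V x) x := (hVdiff x).hasDerivAt
      have hd2 : HasDerivAt (fun t => (V t) ^ (1/μ))
          (deriv V x * (1/μ) * (V x) ^ (1/μ - 1)) x := hd1.rpow_const (Or.inl hVx.ne')
      have hd3 := (Real.hasDerivAt_arctan ((V x) ^ (1/μ))).comp x hd2
      have hd4 : HasDerivAt (fun t => (Real.pi / (2 * Tbar)) * t)
          (Real.pi / (2 * Tbar)) x := by
        simpa using (hasDerivAt_id x).const_mul (Real.pi / (2 * Tbar))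
      simpa [hg, Function.comp, Pi.add_def] using hd3.add hd4
    apply antitoneOn_of_deriv_nonpos (convex_Icc 0 Tbar) hgcont
    · intro x hx
      exact (hderiv x hx).differentiableAt.differentiableWithinAt
    · intro x hx
      rw [(hderiv x hx).deriv]
      rw [interior_Icc] at hx
      have hVx : 0 < V x := hpos x ⟨hx.1.le, hx.2.le⟩
      set u : ℝ := (V x) ^ (1/μ) with hu
      have hu0 : 0 < u := Real.rpow_pos_of_pos hVx _
      have hA : 0 < 1 + u^2 := by positivity
      have husq : u^2 = (V x) ^ (2/μ) := by
        rw [hu, ← Real.rpow_natCast ((V x) ^ (1/μ)) 2, ← Real.rpow_mul hVx.le]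
        norm_num
        ring_nf
      have hP : 0 < (V x) ^ (1/μ - 1) := Real.rpow_pos_of_pos hVx _
      have f1 : (V x) ^ (1 + 1/μ) * (V x) ^ (1/μ - 1) = (V x) ^ (2/μ) := by
        rw [← Real.rpow_add hVx]; ring_nf
      have f2 : (V x) ^ (1 - 1/μ) * (V x) ^ (1/μ - 1) = 1 := by
        rw [← Real.rpow_add hVx]
        norm_num
      have hVd := hVdot x hx.1.le hVx
      have key : deriv V x * (1/μ) * (V x) ^ (1/μ - 1)
          ≤ -(Real.pi / (2 * Tbar)) * (1 + u^2) := by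
        have hmul := mul_le_mul_of_nonneg_right hVd hP.le
        have hcμ : c / μ = Real.pi / (2 * Tbar) := by
          rw [hc]; field_simp
        calc deriv V x * (1/μ) * (V x) ^ (1/μ - 1)
            = (deriv V x * (V x) ^ (1/μ - 1)) * (1/μ) := by ring
          _ ≤ ((-c * (V x) ^ (1 + 1/μ) - c * (V x) ^ (1 - 1/μ)) * (V x) ^ (1/μ - 1)) * (1/μ) := by
              apply mul_le_mul_of_nonneg_right hmul (by positivity)
          _ = -(c/μ) * ((V x) ^ (1 + 1/μ) * (V x) ^ (1/μ - 1)
                + (V x) ^ (1 - 1/μ) * (V x) ^ (1/μ - 1)) := by ring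
          _ = -(c/μ) * ((V x) ^ (2/μ) + 1) := by rw [f1, f2]
          _ = -(Real.pi / (2 * Tbar)) * (1 + u^2) := by rw [hcμ, husq]; ring
      have h1A : 0 < 1 / (1 + u^2) := by positivity
      have := mul_le_mul_of_nonneg_left key h1A.le
      have heq : 1 / (1 + u^2) * (-(Real.pi / (2 * Tbar)) * (1 + u^2))
          = -(Real.pi / (2 * Tbar)) := by
        field_simp
      rw [heq] at this
      linarith
  have hg0 : g 0 < Real.pi / 2 := by
    simp only [hg, mul_zero, add_zero]
    exact Real.arctan_lt_pi_div_two _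
  have hgT : Real.pi / 2 < g Tbar := by
    have harc : 0 < Real.arctan ((V Tbar) ^ (1/μ)) := by
      rw [← Real.arctan_zero]
      exact Real.arctan_strictMono (Real.rpow_pos_of_pos hcon _)
    have : Real.pi / (2 * Tbar) * Tbar = Real.pi / 2 := by
      field_simp
    simp only [hg]
    rw [this]
    linarith
  have := hganti (Set.left_mem_Icc.mpr hTbar.le) (Set.right_mem_Icc.mpr hTbar.le) hTbar.le
  exact lt_irrefl _ (hgT.trans (this.trans_lt hg0))
end
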